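/- Let a goods instance with n agents be given, and let x be a weighted proportional fractional allocation such that every fractional item is shared by exactly two agents (x_i(e) > 0 for exactly two agents i), distinct fractional items are shared by distinct pairs of agents, and the item-sharing graph — the simple graph on the agent set N with one edge {i, j} for each fractional item, joining its two holders i and j — is a tree on all n agents (hence there are exactly n − 1 fractional items). Then there exists an integral allocation X that allocates each non-fractional item to its sole holder and each fractional item to one of its two holders, such that ∑_{i∈N} max(w_i·v_i(M) − v_i(X_i), 0) ≤ n/3. -/

import Mathlib

/-!
Root the sharing tree at any agent `r`. Every fractional item is then the edge between some
agent `a ≠ r` and its parent, and by weighted proportionality each agent's subsidy is at most the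
positive part of its rounding loss on the fractional items.

Take an edge of maximal depth. Either it has a sibling edge, or it has a parent edge with no
other child edge left, or it is the only edge left. Two items with a common holder can always be
rounded so that the three agents involved lose at most `2/3` in total; a single item can be
rounded with loss at most `1/2`. So the `n - 1` edges cost at most `n/3`. The `2/3` bound is a
case analysis whose key inequality is `y q (1 - y) (1 - q) ≤ 1/16 < 1/9`.
-/

open Finset

lemma mul_le_third_or_one_sub_mul_one_sub_le_third {u t : ℝ}
    (ht₀ : 0 ≤ t) (ht₁ : t ≤ 1) : u * t ≤ 1 / 3 ∨ (1 - u) * (1 - t) ≤ 1 / 3 := by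
  by_contra! h
  have hprod := mul_lt_mul'' h.1 h.2 (by norm_num) (by norm_num)
  nlinarith [sq_nonneg (2 * u - 1), sq_nonneg (2 * t - 1),
    mul_le_of_le_one_right (sq_nonneg (2 * u - 1)) (by nlinarith : (2 * t - 1) ^ 2 ≤ 1)]

/-- Two items shared by a centre agent and one other agent each: `yₖ` is the centre's share of
item `k` and `qₖ` its value to the centre. Choosing `tₖ = 1` gives item `k` to the centre and
`tₖ = 0` to the other holder, whose loss is then at most `tₖ - yₖ`. -/
lemma exists_cherry_rounding {y₁ y₂ q₁ q₂ : ℝ} (hy₁₀ : 0 ≤ y₁) (hy₁₁ : y₁ ≤ 1)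
    (hy₂₀ : 0 ≤ y₂) (hy₂₁ : y₂ ≤ 1) (hq₁₀ : 0 ≤ q₁) (hq₁₁ : q₁ ≤ 1)
    (hq₂₀ : 0 ≤ q₂) (hq₂₁ : q₂ ≤ 1) :
    ∃ t₁ t₂ : ℝ, (t₁ = 0 ∨ t₁ = 1) ∧ (t₂ = 0 ∨ t₂ = 1) ∧
      max (t₁ - y₁) 0 + max (t₂ - y₂) 0 + max ((y₁ - t₁) * q₁ + (y₂ - t₂) * q₂) 0 ≤ 2 / 3 := by
  by_contra! h
  have h₀₀ := h 0 0 (.inl rfl) (.inl rfl)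
  have h₁₁ := h 1 1 (.inr rfl) (.inr rfl)
  have h₁₀ := h 1 0 (.inr rfl) (.inl rfl)
  have h₀₁ := h 0 1 (.inl rfl) (.inr rfl)
  simp only [zero_sub, max_eq_right (neg_nonpos.2 hy₁₀), max_eq_right (neg_nonpos.2 hy₂₀),
    max_eq_left (sub_nonneg.2 hy₁₁), max_eq_left (sub_nonneg.2 hy₂₁), sub_zero] at h₀₀ h₁₁ h₁₀ h₀₁
  rw [max_eq_left (by positivity)] at h₀₀
  rw [max_eq_right (by nlinarith)] at h₁₁
  have h₁₆ := mul_le_third_or_one_sub_mul_one_sub_le_third (u := y₁) hq₁₀ hq₁₁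
  have h₂₆ := mul_le_third_or_one_sub_mul_one_sub_le_third (u := y₂) hq₂₀ hq₂₁
  rcases max_cases ((y₁ - 1) * q₁ + y₂ * q₂) 0 with ⟨h₁, hP₁⟩ | ⟨h₁, _⟩ <;>
    rcases max_cases (y₁ * q₁ + (y₂ - 1) * q₂) 0 with ⟨h₂, hP₂⟩ | ⟨h₂, _⟩ <;>
    rw [h₁] at h₁₀ <;> rw [h₂] at h₀₁
  · -- both centre losses are positive
    have hsum : 1 ≤ y₁ + y₂ := by
      nlinarith [mul_le_mul hP₁ hP₂ (le_refl 0) (by nlinarith), mul_nonneg hq₁₀ hq₂₀,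
        mul_nonneg (mul_nonneg hq₁₀ hq₂₀) (sq_nonneg (y₁ + y₂ - 1))]
    rcases le_total y₁ (1 / 2) with h₁ | h₁ <;> rcases le_total y₂ (1 / 2) with h₂ | h₂
    · nlinarith [mul_nonneg hq₁₀ (by linarith : (0 : ℝ) ≤ 1 - 2 * y₁),
        mul_nonneg hq₂₀ (by linarith : (0 : ℝ) ≤ 1 - 2 * y₂)]
    · nlinarith [mul_nonneg hq₁₀ (by linarith : (0 : ℝ) ≤ 1 - 2 * y₁),
        mul_le_of_le_one_right (by linarith : (0 : ℝ) ≤ 2 * y₂ - 1) hq₂₁]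
    · nlinarith [mul_nonneg hq₂₀ (by linarith : (0 : ℝ) ≤ 1 - 2 * y₂),
        mul_le_of_le_one_right (by linarith : (0 : ℝ) ≤ 2 * y₁ - 1) hq₁₁]
    · nlinarith [mul_le_of_le_one_right (by linarith : (0 : ℝ) ≤ 2 * y₁ - 1) hq₁₁,
        mul_le_of_le_one_right (by linarith : (0 : ℝ) ≤ 2 * y₂ - 1) hq₂₁]
  · rcases h₁₆ with h | h <;> nlinarith
  · rcases h₂₆ with h | h <;> nlinarith
  · nlinarith

lemma max_mul_le_max_of_le_one {a r : ℝ} (hr₀ : 0 ≤ r) (hr₁ : r ≤ 1) :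
    max (a * r) 0 ≤ max a 0 := by
  rcases le_total a 0 with ha | ha
  · rw [max_eq_right (mul_nonpos_of_nonpos_of_nonneg ha hr₀), max_eq_right ha]
  · exact max_le_max (mul_le_of_le_one_right ha hr₁) le_rfl

section

variable {N M : Type*}

structure IsSharedBy (x : N → M → ℝ) (e : M) (a b : N) : Prop where
  ne : a ≠ b
  pos_left : 0 < x a e
  pos_right : 0 < x b e
  add_eq_one : x a e + x b e = 1
  eq_zero : ∀ i, i ≠ a → i ≠ b → x i e = 0

variable {x v : N → M → ℝ} {e : M} {a b : N}

lemma IsSharedBy.symm (h : IsSharedBy x e a b) : IsSharedBy x e b a :=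
  ⟨h.ne.symm, h.pos_right, h.pos_left, by linarith [h.add_eq_one], fun i hb ha => h.eq_zero i ha hb⟩

section Holders

variable [Fintype N]

noncomputable def holders (x : N → M → ℝ) (e : M) : Finset N := univ.filter fun i => 0 < x i e

@[simp] lemma mem_holders {i : N} : i ∈ holders x e ↔ 0 < x i e := by
  simp [holders]

variable [DecidableEq N]

lemma IsSharedBy.holders_eq (h : IsSharedBy x e a b) : holders x e = {a, b} := by
  ext i
  by_cases ha : i = a
  · simp [ha, h.pos_left]
  by_cases hb : i = b
  · simp [hb, h.pos_right]
  simp [ha, hb, h.eq_zero i ha hb]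

lemma isSharedBy_of_holders_eq (hx₀ : ∀ i, 0 ≤ x i e) (hsum : ∑ i, x i e = 1) (hab : a ≠ b)
    (h : holders x e = {a, b}) : IsSharedBy x e a b := by
  have hmem : ∀ i, 0 < x i e ↔ i = a ∨ i = b := fun i => by
    rw [← mem_holders, h, mem_insert, mem_singleton]
  have hzero : ∀ i, i ≠ a → i ≠ b → x i e = 0 := fun i ha hb =>
    le_antisymm (not_lt.1 fun hi => ((hmem i).1 hi).elim ha hb) (hx₀ i)
  refine ⟨hab, (hmem a).2 (.inl rfl), (hmem b).2 (.inr rfl), ?_, hzero⟩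
  rw [← hsum, ← sum_pair hab (f := fun i => x i e)]
  refine sum_subset (subset_univ _) fun i _ hi => ?_
  simp only [mem_insert, mem_singleton, not_or] at hi
  exact hzero i hi.1 hi.2

end Holders

section RoundingLoss

variable [DecidableEq N]

def roundingLoss (x v : N → M → ℝ) (X : M → N) (T : Finset M) (i : N) : ℝ :=
  ∑ e ∈ T, (x i e - if X e = i then 1 else 0) * v i e

lemma roundingLoss_congr {X Y : M → N} {T : Finset M} (h : ∀ e ∈ T, X e = Y e) (i : N) :
    roundingLoss x v X T i = roundingLoss x v Y T i :=
  sum_congr rfl fun e he => by rw [h e he]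

lemma IsSharedBy.loss_eq (h : IsSharedBy x e a b) {t : ℝ} (ht : t = 0 ∨ t = 1) {X : M → N}
    (hX : X e = if t = 1 then b else a) (i : N) :
    (x i e - if X e = i then 1 else 0) * v i e =
      if i = a then (t - x b e) * v a e else if i = b then (x b e - t) * v b e else 0 := by
  have := h.add_eq_one
  rw [hX]
  by_cases ha : i = a
  · subst ha
    rcases ht with rfl | rfl <;> simp [h.ne.symm]
    · rw [show x i e - 1 = -x b e by linarith]; ring
    · left; linarith
  by_cases hb : i = b
  · subst hb
    rcases ht with rfl | rfl <;> simp [ha, h.ne]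
  · rcases ht with rfl | rfl <;> simp [h.eq_zero i ha hb, ha, hb, Ne.symm ha, Ne.symm hb]

lemma max_sub_le_max_roundingLoss [Fintype M] {w : ℝ} {X : M → N} {i : N}
    (hw : w * ∑ e, v i e ≤ ∑ e, x i e * v i e) :
    max (w * ∑ e, v i e - ∑ e, if X e = i then v i e else 0) 0 ≤
      max (roundingLoss x v X univ i) 0 := by
  refine max_le_max ?_ le_rfl
  simp only [roundingLoss, sub_mul, sum_sub_distrib, ite_mul, one_mul, zero_mul]
  linarith

variable [Fintype N]

def totalRoundingLoss (x v : N → M → ℝ) (X : M → N) (T : Finset M) : ℝ :=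
  ∑ i, max (roundingLoss x v X T i) 0

lemma exists_rounding_union [DecidableEq M] {S T : Finset M} (hST : Disjoint S T) {X Y : M → N}
    (hX : ∀ e ∈ S, 0 < x (X e) e) (hY : ∀ e ∈ T, 0 < x (Y e) e) :
    ∃ Z : M → N, (∀ e ∈ S ∪ T, 0 < x (Z e) e) ∧
      totalRoundingLoss x v Z (S ∪ T) ≤ totalRoundingLoss x v X S + totalRoundingLoss x v Y T := by
  refine ⟨S.piecewise X Y, fun e he => ?_, ?_⟩
  · by_cases heS : e ∈ S
    · rw [S.piecewise_eq_of_mem X Y heS]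
      exact hX e heS
    · rw [S.piecewise_eq_of_notMem X Y heS]
      exact hY e ((mem_union.1 he).resolve_left heS)
  simp only [totalRoundingLoss, ← sum_add_distrib]
  refine sum_le_sum fun i _ => ?_
  rw [roundingLoss, sum_union hST, ← roundingLoss, ← roundingLoss,
    roundingLoss_congr (fun e he => S.piecewise_eq_of_mem X Y he),
    roundingLoss_congr (fun e he => S.piecewise_eq_of_notMem X Y (disjoint_right.1 hST he))]
  exact max_le (add_le_add (le_max_left _ _) (le_max_left _ _)) (by positivity)

lemma exists_rounding_of_sole_holder (hx₀ : ∀ i e, 0 ≤ x i e) (hsum : ∀ e, ∑ i, x i e = 1)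
    {T : Finset M} (hT : ∀ e ∈ T, #(holders x e) = 1) :
    ∃ X : M → N, (∀ e ∈ T, 0 < x (X e) e) ∧ totalRoundingLoss x v X T = 0 := by
  have hheld : ∀ e, ∃ i, 0 < x i e := fun e => by
    by_contra! h
    linarith [hsum e, sum_nonpos fun i (_ : i ∈ univ) => h i]
  choose X hX using hheld
  refine ⟨X, fun e _ => hX e, sum_eq_zero fun i _ => ?_⟩
  suffices roundingLoss x v X T i = 0 by rw [this, max_self]
  refine sum_eq_zero fun e he => ?_
  obtain ⟨a, ha⟩ := card_eq_one.1 (hT e he)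
  have hmem : ∀ j, 0 < x j e ↔ j = a := fun j => by rw [← mem_holders, ha, mem_singleton]
  have hzero : ∀ j, j ≠ a → x j e = 0 := fun j hj =>
    le_antisymm (not_lt.1 fun h => hj ((hmem j).1 h)) (hx₀ j e)
  have hone : x a e = 1 := by
    rw [← hsum e, sum_eq_single a (fun j _ hj => hzero j hj) (by simp)]
  rw [(hmem _).1 (hX e)]
  by_cases hi : i = a
  · simp [hi, hone]
  · simp [hzero i hi, Ne.symm hi]

lemma IsSharedBy.exists_rounding (h : IsSharedBy x e a b) (hv₀ : ∀ i, 0 ≤ v i e)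
    (hv₁ : ∀ i, v i e ≤ 1) :
    ∃ X : M → N, 0 < x (X e) e ∧ totalRoundingLoss x v X {e} ≤ 1 / 2 := by
  set t : ℝ := if x b e ≤ 1 / 2 then 0 else 1 with ht_def
  have ht : t = 0 ∨ t = 1 := by rw [ht_def]; split_ifs <;> simp
  set X : M → N := fun _ => if t = 1 then b else a
  refine ⟨X, by simp only [X]; split_ifs; exacts [h.pos_right, h.pos_left], ?_⟩
  have hloss : ∀ i, max (roundingLoss x v X {e} i) 0 =
      (if i = a then max ((t - x b e) * v a e) 0 else 0) +
        (if i = b then max ((x b e - t) * v b e) 0 else 0) := by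
    intro i
    rw [roundingLoss, sum_singleton, h.loss_eq ht rfl]
    by_cases ha : i = a
    · simp [ha, h.ne]
    · by_cases hb : i = b <;> simp [ha, hb, h.ne.symm]
  simp only [totalRoundingLoss, hloss, sum_add_distrib, sum_ite_eq', mem_univ, if_true]
  calc _ ≤ max (t - x b e) 0 + max (x b e - t) 0 :=
        add_le_add (max_mul_le_max_of_le_one (hv₀ a) (hv₁ a))
          (max_mul_le_max_of_le_one (hv₀ b) (hv₁ b))
    _ ≤ 1 / 2 := by
        rw [← neg_sub t, max_zero_add_max_neg_zero_eq_abs_self, abs_le, ht_def]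
        have := h.pos_left
        have := h.pos_right
        have := h.add_eq_one
        split_ifs <;> constructor <;> linarith

lemma IsSharedBy.exists_rounding_pair [DecidableEq M] {e₁ e₂ : M} {a₁ a₂ : N}
    (h₁ : IsSharedBy x e₁ a₁ b) (h₂ : IsSharedBy x e₂ a₂ b) (ha : a₁ ≠ a₂) (he : e₁ ≠ e₂)
    (hv₀ : ∀ i e, 0 ≤ v i e) (hv₁ : ∀ i e, v i e ≤ 1) :
    ∃ X : M → N, (∀ e ∈ ({e₁, e₂} : Finset M), 0 < x (X e) e) ∧
      totalRoundingLoss x v X {e₁, e₂} ≤ 2 / 3 := by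
  obtain ⟨t₁, t₂, ht₁, ht₂, hle⟩ := exists_cherry_rounding h₁.pos_right.le
    (by linarith [h₁.pos_left, h₁.add_eq_one]) h₂.pos_right.le
    (by linarith [h₂.pos_left, h₂.add_eq_one]) (hv₀ b e₁) (hv₁ b e₁) (hv₀ b e₂) (hv₁ b e₂)
  set X : M → N := fun e =>
    if e = e₁ then (if t₁ = 1 then b else a₁) else if t₂ = 1 then b else a₂
  have hX₁ : X e₁ = if t₁ = 1 then b else a₁ := if_pos rfl
  have hX₂ : X e₂ = if t₂ = 1 then b else a₂ := if_neg he.symm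
  refine ⟨X, ?_, ?_⟩
  · simp only [mem_insert, mem_singleton, forall_eq_or_imp, forall_eq, hX₁, hX₂]
    constructor <;> split_ifs
    exacts [h₁.pos_right, h₁.pos_left, h₂.pos_right, h₂.pos_left]
  have hloss : ∀ i, max (roundingLoss x v X {e₁, e₂} i) 0 =
      (if i = a₁ then max ((t₁ - x b e₁) * v a₁ e₁) 0 else 0) +
      (if i = a₂ then max ((t₂ - x b e₂) * v a₂ e₂) 0 else 0) +
      (if i = b then max ((x b e₁ - t₁) * v b e₁ + (x b e₂ - t₂) * v b e₂) 0 else 0) := by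
    intro i
    rw [roundingLoss, sum_pair he, h₁.loss_eq ht₁ hX₁, h₂.loss_eq ht₂ hX₂]
    rcases eq_or_ne i a₁ with rfl | hi₁
    · simp [ha, h₁.ne]
    rcases eq_or_ne i a₂ with rfl | hi₂
    · simp [hi₁, h₂.ne]
    rcases eq_or_ne i b with rfl | hi
    · simp [h₁.ne.symm, h₂.ne.symm]
    · simp [hi₁, hi₂, hi]
  simp only [totalRoundingLoss, hloss, sum_add_distrib, sum_ite_eq', mem_univ, if_true]
  refine le_trans (add_le_add (add_le_add ?_ ?_) le_rfl) hle <;>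
    exact max_mul_le_max_of_le_one (hv₀ _ _) (hv₁ _ _)

end RoundingLoss

section ParentMap

structure IsParentMap (r : N) (p : N → N) (d : N → ℕ) : Prop where
  depth_eq_zero_iff : ∀ a, d a = 0 ↔ a = r
  depth_parent : ∀ a, a ≠ r → d (p a) + 1 = d a

/-- Item `e` stands for the edge from `c e` to its parent. -/
def ParentClosed (r : N) (p : N → N) (c : M → N) (T : Finset M) : Prop :=
  ∀ e ∈ T, p (c e) ≠ r → ∃ f ∈ T, c f = p (c e)

variable {r : N} {p : N → N} {d : N → ℕ} {c : M → N} {T : Finset M}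

lemma IsParentMap.parent_ne (hp : IsParentMap r p d) {a : N} (ha : a ≠ r) : p a ≠ a := by
  intro h
  have := hp.depth_parent a ha
  rw [h] at this
  omega

lemma IsParentMap.eq_of_parent_mem (hp : IsParentMap r p d) {a b : N} (ha : a ≠ r) (hb : b ≠ r)
    (h₁ : b = a ∨ b = p a) (h₂ : p b = a ∨ p b = p a) : b = a := by
  rcases h₁ with rfl | rfl
  · rfl
  rcases h₂ with h | h
  · have h₁ := hp.depth_parent a ha
    have h₂ := hp.depth_parent (p a) hb
    rw [h] at h₂
    omega
  · exact absurd h (hp.parent_ne hb)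

lemma ParentClosed.erase [DecidableEq M] (h : ParentClosed r p c T) {e : M}
    (he : ∀ f ∈ T, f ≠ e → p (c f) ≠ c e) : ParentClosed r p c (T.erase e) := by
  intro f hf hfr
  obtain ⟨g, hg, hgf⟩ := h f (mem_of_mem_erase hf) hfr
  refine ⟨g, mem_erase.2 ⟨?_, hg⟩, hgf⟩
  rintro rfl
  exact he f (mem_of_mem_erase hf) (ne_of_mem_erase hf) hgf.symm

lemma IsParentMap.eq_singleton_of_parent_eq (hp : IsParentMap r p d) (hT : ∀ e ∈ T, c e ≠ r)
    {e : M} (he : e ∈ T) (hmax : ∀ f ∈ T, d (c f) ≤ d (c e)) (hr : p (c e) = r)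
    (hsib : ∀ f ∈ T, f ≠ e → p (c f) ≠ p (c e)) : T = {e} := by
  refine eq_singleton_iff_unique_mem.2 ⟨he, fun f hf => ?_⟩
  by_contra hfe
  refine hsib f hf hfe (hr ▸ (hp.depth_eq_zero_iff _).1 ?_)
  have := hp.depth_parent _ (hT f hf)
  have := hp.depth_parent _ (hT e he)
  have := hmax f hf
  rw [hr, (hp.depth_eq_zero_iff r).2 rfl] at *
  omega

/-- Take `e₁` of maximal depth: `e₂` is a sibling edge of `e₁`, or else the parent edge of `e₁`,
which then has no other child edge in `T`. -/
lemma IsParentMap.exists_singleton_or_cherry [DecidableEq M] (hp : IsParentMap r p d)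
    (hT : ∀ e ∈ T, c e ≠ r) (hinj : Set.InjOn c T) (hup : ParentClosed r p c T)
    (hne : T.Nonempty) :
    (∃ e, T = {e}) ∨ ∃ e₁ ∈ T, ∃ e₂ ∈ T, e₁ ≠ e₂ ∧
      ((p (c e₂) = p (c e₁) ∧ c e₁ ≠ c e₂) ∨ (c e₂ = p (c e₁) ∧ c e₁ ≠ p (c e₂))) ∧
      ParentClosed r p c ((T.erase e₁).erase e₂) := by
  obtain ⟨e, he, hmax⟩ := T.exists_max_image (fun f => d (c f)) hne
  have hdepth : ∀ f ∈ T, d (p (c f)) + 1 = d (c f) := fun f hf => hp.depth_parent _ (hT f hf)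
  have hdeep : ∀ f ∈ T, ∀ g ∈ T, d (c g) = d (c e) → p (c f) ≠ c g := by
    intro f hf g _ hg h
    have := hdepth f hf
    have := hmax f hf
    rw [h] at *
    omega
  by_cases hsib : ∃ f ∈ T, f ≠ e ∧ p (c f) = p (c e)
  · obtain ⟨f, hf, hfe, hpf⟩ := hsib
    have hdf : d (c f) = d (c e) := by
      have := hdepth f hf
      have := hdepth e he
      rw [hpf] at *
      omega
    refine .inr ⟨e, he, f, hf, hfe.symm, .inl ⟨hpf, fun h => hfe (hinj hf he h.symm)⟩, ?_⟩
    exact (hup.erase fun g hg _ => hdeep g hg e he rfl).erase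
      fun g hg _ => hdeep g (mem_of_mem_erase hg) f hf hdf
  push Not at hsib
  by_cases hr : p (c e) = r
  · exact .inl ⟨e, hp.eq_singleton_of_parent_eq hT he hmax hr hsib⟩
  obtain ⟨f, hf, hcf⟩ := hup e he hr
  have hfe : f ≠ e := fun h => hp.parent_ne (hT e he) (h ▸ hcf).symm
  refine .inr ⟨e, he, f, hf, hfe.symm, .inr ⟨hcf, fun h => ?_⟩, ?_⟩
  · have := hdepth e he
    have := hdepth f hf
    rw [hcf, ← h] at *
    omega
  · exact (hup.erase fun g hg _ => hdeep g hg e he rfl).erase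
      fun g hg _ h => hsib g (mem_of_mem_erase hg) (ne_of_mem_erase hg) (h.trans hcf)

theorem IsParentMap.exists_rounding [DecidableEq N] [Fintype N] [DecidableEq M]
    (hp : IsParentMap r p d) (hv₀ : ∀ i e, 0 ≤ v i e) (hv₁ : ∀ i e, v i e ≤ 1)
    (hc : ∀ e ∈ T, c e ≠ r ∧ IsSharedBy x e (c e) (p (c e))) (hinj : Set.InjOn c T)
    (hup : ParentClosed r p c T) :
    ∃ X : M → N, (∀ e ∈ T, 0 < x (X e) e) ∧ totalRoundingLoss x v X T ≤ (#T + 1) / 3 := by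
  induction T using Finset.strongInduction with
  | H T ih =>
  rcases T.eq_empty_or_nonempty with rfl | hne
  · exact ⟨fun _ => r, by simp, by simp [totalRoundingLoss, roundingLoss]⟩
  rcases hp.exists_singleton_or_cherry (fun e he => (hc e he).1) hinj hup hne with
    ⟨e, rfl⟩ | ⟨e₁, he₁, e₂, he₂, he, hcherry, hup'⟩
  · obtain ⟨X, hX, hle⟩ := (hc e (mem_singleton_self e)).2.exists_rounding (hv₀ · e) (hv₁ · e)
    exact ⟨X, by simpa using hX, by rw [card_singleton]; linarith⟩
  set T' := (T.erase e₁).erase e₂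
  have hT' : T' ⊆ T := (erase_subset _ _).trans (erase_subset _ _)
  obtain ⟨Y, hY, hYle⟩ := ih T' ((erase_ssubset (mem_erase.2 ⟨he.symm, he₂⟩)).trans
    (erase_ssubset he₁)) (fun e he => hc e (hT' he)) (hinj.mono (coe_subset.2 hT')) hup'
  obtain ⟨X, hX, hXle⟩ : ∃ X : M → N, (∀ e ∈ ({e₁, e₂} : Finset M), 0 < x (X e) e) ∧
      totalRoundingLoss x v X {e₁, e₂} ≤ 2 / 3 := by
    obtain ⟨-, h₁⟩ := hc e₁ he₁
    obtain ⟨-, h₂⟩ := hc e₂ he₂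
    rcases hcherry with ⟨hpp, hne⟩ | ⟨hcp, hne⟩
    · rw [← hpp] at h₁
      exact h₁.exists_rounding_pair h₂ hne he hv₀ hv₁
    · rw [← hcp] at h₁
      exact h₁.exists_rounding_pair h₂.symm hne he hv₀ hv₁
  have hunion : {e₁, e₂} ∪ T' = T := by
    rw [insert_union, singleton_union, insert_erase (mem_erase.2 ⟨he.symm, he₂⟩),
      insert_erase he₁]
  have hdisj : Disjoint {e₁, e₂} T' := by
    simp [T', disjoint_insert_left]
  obtain ⟨Z, hZ, hZle⟩ := exists_rounding_union (v := v) hdisj hX hY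
  rw [hunion] at hZ hZle
  have hcard : #T = #T' + 2 := by
    rw [← hunion, card_union_of_disjoint hdisj, card_pair he, add_comm]
  refine ⟨Z, hZ, ?_⟩
  rw [hcard]
  push_cast
  linarith

end ParentMap

namespace SimpleGraph

variable {V : Type*} {G : SimpleGraph V}

lemma Connected.exists_isParentMap (hG : G.Connected) (r : V) :
    ∃ p : V → V, (∀ a, a ≠ r → G.Adj a (p a)) ∧ IsParentMap r p (G.dist r) := by
  have hparent : ∀ a, ∃ u, a ≠ r → G.Adj a u ∧ G.dist r u + 1 = G.dist r a := by
    intro a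
    obtain ⟨q, hq⟩ := hG.exists_walk_length_eq_dist a r
    cases q with
    | nil => exact ⟨r, fun h => (h rfl).elim⟩
    | @cons _ u _ hadj q' =>
      refine ⟨u, fun _ => ⟨hadj, ?_⟩⟩
      have h₁ : G.dist r u ≤ q'.length := dist_comm.trans_le (dist_le q')
      have h₂ : G.dist r a ≤ G.dist r u + G.dist u a := hG.dist_triangle
      rw [dist_eq_one_iff_adj.2 hadj.symm] at h₂
      rw [Walk.length_cons, dist_comm] at hq
      omega
  choose p hp using hparent
  exact ⟨p, fun a ha => (hp a ha).1,
    ⟨fun a => hG.dist_eq_zero_iff.trans eq_comm, fun a ha => (hp a ha).2⟩⟩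

/-- A tree has as many edges as non-root vertices, so the parent edges are all of its edges. -/
lemma IsTree.adj_eq_parent [Fintype V] [DecidableEq V] (hG : G.IsTree) {r : V} {p : V → V}
    {d : V → ℕ} (hadj : ∀ a, a ≠ r → G.Adj a (p a)) (hp : IsParentMap r p d) {i j : V}
    (hij : G.Adj i j) : (i ≠ r ∧ j = p i) ∨ (j ≠ r ∧ i = p j) := by
  classical
  have hmaps : Set.MapsTo (fun a => s(a, p a)) (univ.erase r : Finset V) G.edgeFinset :=
    fun a ha => mem_edgeFinset.2 (hadj a (mem_erase.1 ha).1)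
  have hinj : Set.InjOn (fun a => s(a, p a)) (univ.erase r : Finset V) := by
    intro a ha b hb h
    rcases Sym2.eq_iff.1 h with ⟨h, -⟩ | ⟨h₁, h₂⟩
    · exact h
    · exact hp.eq_of_parent_mem (mem_erase.1 hb).1 (mem_erase.1 ha).1 (.inr h₁) (.inl h₂)
  have hcard : #G.edgeFinset ≤ #(univ.erase r) := by
    have := hG.card_edgeFinset
    rw [card_erase_of_mem (mem_univ r), card_univ]
    omega
  obtain ⟨a, ha, h⟩ := surjOn_of_injOn_of_card_le _ hmaps hinj hcard
    (show s(i, j) ∈ G.edgeFinset from mem_edgeFinset.2 hij)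
  rcases Sym2.eq_iff.1 h with ⟨rfl, rfl⟩ | ⟨rfl, rfl⟩
  · exact .inl ⟨(mem_erase.1 ha).1, rfl⟩
  · exact .inr ⟨(mem_erase.1 ha).1, rfl⟩

end SimpleGraph

section Allocation

variable [Fintype N] [DecidableEq N] {r : N} {p : N → N} {d : N → ℕ}

lemma card_add_one_le_of_injOn_of_ne {c : M → N} {T : Finset M} (hr : ∀ e ∈ T, c e ≠ r)
    (hinj : Set.InjOn c T) : #T + 1 ≤ Fintype.card N := by
  have := card_le_card_of_injOn c (fun e he => mem_erase.2 ⟨hr e he, mem_univ _⟩) hinj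
  rw [card_erase_of_mem (mem_univ r), card_univ] at this
  have := Fintype.card_pos_iff.2 ⟨r⟩
  omega

lemma exists_isSharedBy_parent {G : SimpleGraph N} (hG : G.IsTree)
    (hadj : ∀ a, a ≠ r → G.Adj a (p a)) (hp : IsParentMap r p d)
    (hGx : ∀ i j, G.Adj i j ↔ i ≠ j ∧ ∃ e, 0 < x i e ∧ 0 < x j e)
    (hx₀ : ∀ i, 0 ≤ x i e) (hsum : ∑ i, x i e = 1) (h₂ : #(holders x e) = 2) :
    ∃ a, a ≠ r ∧ IsSharedBy x e a (p a) := by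
  obtain ⟨i, j, hij, hh⟩ := card_eq_two.1 h₂
  have hi : 0 < x i e := mem_holders.1 (hh ▸ mem_insert_self i {j})
  have hj : 0 < x j e := mem_holders.1 (hh ▸ mem_insert_of_mem (mem_singleton_self j))
  rcases hG.adj_eq_parent hadj hp ((hGx i j).2 ⟨hij, e, hi, hj⟩) with ⟨hir, rfl⟩ | ⟨hjr, rfl⟩
  · exact ⟨i, hir, isSharedBy_of_holders_eq hx₀ hsum hij hh⟩
  · exact ⟨j, hjr, isSharedBy_of_holders_eq hx₀ hsum hij.symm (hh.trans (pair_comm _ _))⟩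

variable [Fintype M]

noncomputable def fractionalItems (x : N → M → ℝ) : Finset M :=
  univ.filter fun e => #(holders x e) = 2

lemma exists_child_of_fractionalItems {G : SimpleGraph N} (hG : G.IsTree)
    (hadj : ∀ a, a ≠ r → G.Adj a (p a)) (hp : IsParentMap r p d)
    (hGx : ∀ i j, G.Adj i j ↔ i ≠ j ∧ ∃ e, 0 < x i e ∧ 0 < x j e)
    (hx₀ : ∀ i e, 0 ≤ x i e) (hsum : ∀ e, ∑ i, x i e = 1)
    (hshare : ∀ e, #(holders x e) = 1 ∨ #(holders x e) = 2)
    (hdist : ∀ e e', #(holders x e) = 2 → #(holders x e') = 2 → holders x e = holders x e' →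
      e = e') :
    ∃ c : M → N, (∀ e ∈ fractionalItems x, c e ≠ r ∧ IsSharedBy x e (c e) (p (c e))) ∧
      Set.InjOn c (fractionalItems x) ∧ ParentClosed r p c (fractionalItems x) := by
  have : Nonempty N := ⟨r⟩
  choose! c hc using fun e (he : e ∈ fractionalItems x) =>
    exists_isSharedBy_parent hG hadj hp hGx (hx₀ · e) (hsum e) (mem_filter.1 he).2
  refine ⟨c, hc, fun e he e' he' h => hdist e e' (mem_filter.1 he).2 (mem_filter.1 he').2 ?_, ?_⟩
  · rw [(hc e he).2.holders_eq, (hc e' he').2.holders_eq, h]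
  intro e _ hr
  set a := p (c e)
  obtain ⟨-, f, hfa, hfpa⟩ := (hGx a (p a)).1 (hadj a hr)
  have hsub : {a, p a} ⊆ holders x f := by simp [insert_subset_iff, hfa, hfpa]
  have hf : f ∈ fractionalItems x := by
    refine mem_filter.2 ⟨mem_univ f, (hshare f).resolve_left fun h₁ => ?_⟩
    have := card_le_card hsub
    rw [card_pair (hp.parent_ne hr).symm, h₁] at this
    omega
  obtain ⟨hcf, hsh⟩ := hc f hf
  have hmem : ∀ b ∈ ({a, p a} : Finset N), b = c f ∨ b = p (c f) := fun b hb => by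
    simpa [hsh.holders_eq] using hsub hb
  exact ⟨f, hf, (hp.eq_of_parent_mem hcf hr (hmem a (by simp)) (hmem (p a) (by simp))).symm⟩

end Allocation

end

theorem goods_tree_rounding_no_shattered_general
    {N M : Type*} [Fintype N] [Fintype M] [DecidableEq N]
    (w : N → ℝ) (v : N → M → ℝ)
    (hv0 : ∀ i e, 0 ≤ v i e) (hv1 : ∀ i e, v i e ≤ 1)
    (x : N → M → ℝ)
    (hx0 : ∀ i e, 0 ≤ x i e)
    (hxsum : ∀ e, ∑ i, x i e = 1)
    (hWPROP : ∀ i, w i * ∑ e, v i e ≤ ∑ e, x i e * v i e)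
    -- every item is held by one agent or shared by exactly two agents
    (hshare : ∀ e : M,
      (Finset.univ.filter (fun i : N => 0 < x i e)).card = 1 ∨
      (Finset.univ.filter (fun i : N => 0 < x i e)).card = 2)
    -- distinct fractional items are shared by distinct pairs of agents
    (hdist : ∀ e e' : M,
      (Finset.univ.filter (fun i : N => 0 < x i e)).card = 2 →
      (Finset.univ.filter (fun i : N => 0 < x i e')).card = 2 →
      Finset.univ.filter (fun i : N => 0 < x i e) =
        Finset.univ.filter (fun i : N => 0 < x i e') → e = e')
    -- the item-sharing graph is a tree on all agents
    (G : SimpleGraph N)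
    (hG : ∀ i j : N, G.Adj i j ↔ i ≠ j ∧ ∃ e : M, 0 < x i e ∧ 0 < x j e)
    (htree : G.IsTree) :
    ∃ X : M → N,
      (∀ e, 0 < x (X e) e) ∧
      ∑ i, max (w i * (∑ e, v i e) - ∑ e, if X e = i then v i e else 0) 0
        ≤ (Fintype.card N : ℝ) / 3 := by
  classical
  obtain ⟨r⟩ := htree.connected.nonempty
  obtain ⟨p, hadj, hp⟩ := htree.connected.exists_isParentMap r
  obtain ⟨c, hc, hinj, hup⟩ :=
    exists_child_of_fractionalItems htree hadj hp hG hx0 hxsum hshare hdist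
  obtain ⟨X, hX, hXloss⟩ := hp.exists_rounding hv0 hv1 hc hinj hup
  obtain ⟨Y, hY, hYloss⟩ := exists_rounding_of_sole_holder (v := v) hx0 hxsum
    (T := (fractionalItems x)ᶜ) fun e he =>
      (hshare e).resolve_right fun h => mem_compl.1 he (mem_filter.2 ⟨mem_univ e, h⟩)
  obtain ⟨Z, hZ, hZloss⟩ := exists_rounding_union disjoint_compl_right hX hY
  rw [union_compl] at hZ hZloss
  refine ⟨Z, fun e => hZ e (mem_univ e), ?_⟩
  have hcard := card_add_one_le_of_injOn_of_ne (fun e he => (hc e he).1) hinj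
  calc _ ≤ totalRoundingLoss x v Z univ :=
        sum_le_sum fun i _ => max_sub_le_max_roundingLoss (hWPROP i)
    _ ≤ (#(fractionalItems x) + 1) / 3 := by linarith
    _ ≤ Fintype.card N / 3 := by gcongr; exact_mod_cast hcard

/-- Rounding a weighted proportional fractional allocation of goods whose item-sharing
graph is a tree on all `n` agents and has no shattered items: there is an integral
allocation giving every item to one of its holders with total subsidy at most `n/3`. -/
theorem goods_tree_rounding_no_shattered
    {N M : Type*} [Fintype N] [Fintype M] [DecidableEq N]
    (w : N → ℝ) (v : N → M → ℝ)
    (hwpos : ∀ i, 0 < w i) (hwsum : ∑ i, w i = 1)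
    (hv0 : ∀ i e, 0 ≤ v i e) (hv1 : ∀ i e, v i e ≤ 1)
    (x : N → M → ℝ)
    (hx0 : ∀ i e, 0 ≤ x i e) (hx1 : ∀ i e, x i e ≤ 1)
    (hxsum : ∀ e, ∑ i, x i e = 1)
    (hWPROP : ∀ i, w i * ∑ e, v i e ≤ ∑ e, x i e * v i e)
    -- every item is held by one agent or shared by exactly two agents
    (hshare : ∀ e : M,
      (Finset.univ.filter (fun i : N => 0 < x i e)).card = 1 ∨
      (Finset.univ.filter (fun i : N => 0 < x i e)).card = 2)
    -- distinct fractional items are shared by distinct pairs of agents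
    (hdist : ∀ e e' : M,
      (Finset.univ.filter (fun i : N => 0 < x i e)).card = 2 →
      (Finset.univ.filter (fun i : N => 0 < x i e')).card = 2 →
      Finset.univ.filter (fun i : N => 0 < x i e) =
        Finset.univ.filter (fun i : N => 0 < x i e') → e = e')
    -- the item-sharing graph is a tree on all agents
    (G : SimpleGraph N)
    (hG : ∀ i j : N, G.Adj i j ↔ i ≠ j ∧ ∃ e : M, 0 < x i e ∧ 0 < x j e)
    (htree : G.IsTree) :
    ∃ X : M → N,
      (∀ e, 0 < x (X e) e) ∧
      ∑ i, max (w i * (∑ e, v i e) - ∑ e, if X e = i then v i e else 0) 0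
        ≤ (Fintype.card N : ℝ) / 3 :=
  goods_tree_rounding_no_shattered_general w v hv0 hv1 x hx0 hxsum hWPROP hshare hdist G hG htree
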